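/- arXiv:1210.1435 — 4 statements merged into one kernel-verified Lean document; each statement's English description precedes it below -/
import Mathlib

section
/- Let G be a finite acyclic directed graph with an ER-labeling λ, and let u be a vertex. Then the union over all vertices v reachable from u of the unique λ-rising path from u to v forms a spanning tree of the set of vertices reachable from u, rooted at u and directed away from u. -/
/-!
If `(x, y)` is an edge of a rising path from `u`, the prefixes of that path ending at `x` and at
`y` are rising, so by uniqueness every tree edge `(x, y)` extends *the* rising path to `x` to the
rising path to `y`. Hence any walk from `u` along tree edges is itself a rising path, and the
tree path to `v` must be the rising path to `v`.
-/

/-- Directed walks in a graph `E`, recorded by the list of vertices after the start. -/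
inductive DWalk {α : Type*} (E : α → α → Prop) : α → α → List α → Prop
  | nil (u : α) : DWalk E u u []
  | cons {u w v : α} {l : List α} : E u w → DWalk E w v l → DWalk E u v (w :: l)

/-- The sequence of edge labels along a walk from `u` with vertex list `l`. -/
def wLabels {α : Type*} (lab : α → α → ℕ) (u : α) (l : List α) : List ℕ :=
  List.zipWith lab (u :: l) l

lemma List.exists_eq_append_of_mem_zip_cons {α : Type*} :
    ∀ {l : List α} {a x y : α}, (x, y) ∈ (a :: l).zip l →
      ∃ p s, l = p ++ y :: s ∧ x = (a :: p).getLast (cons_ne_nil a p)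
  | [], _, _, _, h => by simp at h
  | w :: t, a, x, y, h => by
    rw [zip_cons_cons, mem_cons] at h
    rcases h with h | h
    · obtain ⟨rfl, rfl⟩ := Prod.mk.inj h
      exact ⟨[], t, rfl, rfl⟩
    · obtain ⟨p, s, rfl, rfl⟩ := exists_eq_append_of_mem_zip_cons h
      exact ⟨w :: p, s, rfl, by simp⟩

lemma wLabels_prefix {α : Type*} (lab : α → α → ℕ) :
    ∀ (a : α) (l₁ l₂ : List α), wLabels lab a l₁ <+: wLabels lab a (l₁ ++ l₂)
  | _, [], _ => List.nil_prefix
  | a, w :: t, l₂ => (List.prefix_cons_inj (lab a w)).2 (wLabels_prefix lab w t l₂)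

namespace DWalk

variable {α : Type*} {E F : α → α → Prop}

lemma eq_getLast : ∀ {a b : α} {l : List α}, DWalk E a b l →
    b = (a :: l).getLast (List.cons_ne_nil a l)
  | _, _, _, nil _ => rfl
  | _, _, _, cons _ h => by simpa using h.eq_getLast

lemma of_append_left : ∀ {a b : α} {l₁ l₂ : List α}, DWalk E a b (l₁ ++ l₂) →
    DWalk E a ((a :: l₁).getLast (List.cons_ne_nil a l₁)) l₁
  | a, _, [], _, _ => nil a
  | _, _, _ :: _, _, cons e h => by simpa using cons e h.of_append_left

lemma append : ∀ {a b c : α} {l₁ l₂ : List α},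
    DWalk E a b l₁ → DWalk E b c l₂ → DWalk E a c (l₁ ++ l₂)
  | _, _, _, _, _, nil _, h₂ => h₂
  | _, _, _, _, _, cons e h₁, h₂ => cons e (h₁.append h₂)

lemma mono_of_mem_zip : ∀ {a b : α} {l : List α}, DWalk E a b l →
    (∀ x y, (x, y) ∈ (a :: l).zip l → E x y → F x y) → DWalk F a b l
  | _, _, _, nil a, _ => nil a
  | x, _, _, cons (w := y) e h, hF =>
    cons (hF x y (by simp) e) (h.mono_of_mem_zip fun x' y' hmem => hF x' y' (by simp [hmem]))

end DWalk

section RisingWalks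

variable {V : Type*} (E : V → V → Prop) (lab : V → V → ℕ) (u : V)

def IsRisingWalk (v : V) (l : List V) : Prop :=
  DWalk E u v l ∧ List.IsChain (· < ·) (wLabels lab u l)

def IsRisingTreeEdge (x y : V) : Prop :=
  E x y ∧ ∃ (v : V) (l : List V), DWalk E u v l ∧ List.IsChain (· < ·) (wLabels lab u l) ∧
    (x, y) ∈ (u :: l).zip l

variable {E lab u}

lemma isRisingWalk_nil : IsRisingWalk E lab u u [] :=
  ⟨DWalk.nil u, List.isChain_nil⟩

lemma IsRisingWalk.of_append_left {v : V} {l₁ l₂ : List V}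
    (h : IsRisingWalk E lab u v (l₁ ++ l₂)) :
    IsRisingWalk E lab u ((u :: l₁).getLast (List.cons_ne_nil u l₁)) l₁ :=
  ⟨h.1.of_append_left, h.2.prefix (wLabels_prefix lab u l₁ l₂)⟩

lemma IsRisingWalk.isRisingTreeEdge_walk {v : V} {l : List V} (h : IsRisingWalk E lab u v l) :
    DWalk (IsRisingTreeEdge E lab u) u v l :=
  h.1.mono_of_mem_zip fun _ _ hmem e => ⟨e, v, l, h.1, h.2, hmem⟩

lemma IsRisingTreeEdge.exists_isRisingWalk {x y : V} (h : IsRisingTreeEdge E lab u x y) :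
    ∃ p, IsRisingWalk E lab u x p ∧ IsRisingWalk E lab u y (p ++ [y]) := by
  obtain ⟨-, v, l, hwalk, hchain, hmem⟩ := h
  obtain ⟨p, s, rfl, rfl⟩ := List.exists_eq_append_of_mem_zip_cons hmem
  have hpy : IsRisingWalk E lab u v ((p ++ [y]) ++ s) := by
    rw [List.append_assoc]; exact ⟨hwalk, hchain⟩
  refine ⟨p, hpy.of_append_left.of_append_left, ?_⟩
  simpa using hpy.of_append_left

lemma IsRisingWalk.append_of_isRisingTreeEdge_walk
    (huniq : ∀ v l l', IsRisingWalk E lab u v l → IsRisingWalk E lab u v l' → l = l') :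
    ∀ {w x : V} {p l : List V}, IsRisingWalk E lab u w p →
      DWalk (IsRisingTreeEdge E lab u) w x l → IsRisingWalk E lab u x (p ++ l)
  | _, _, p, _, hp, .nil _ => by simpa using hp
  | w, _, p, _, hp, .cons (w := y) e hl => by
    obtain ⟨q, hq, hqy⟩ := e.exists_isRisingWalk
    obtain rfl := huniq w q p hq hp
    simpa using hqy.append_of_isRisingTreeEdge_walk huniq hl

end RisingWalks

theorem ER_labeling_source_tree_general {V : Type*}
    (E : V → V → Prop) (lab : V → V → ℕ)
    (hER : ∀ u v : V, (∃ l, DWalk E u v l) →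
      ∃! l, DWalk E u v l ∧ List.Chain' (· < ·) (wLabels lab u l))
    (u : V) :
    ∀ v : V, (∃ l, DWalk E u v l) →
      ∃! l : List V,
        DWalk (fun x y => E x y ∧
          ∃ (v' : V) (l' : List V), DWalk E u v' l' ∧
            List.Chain' (· < ·) (wLabels lab u l') ∧ (x, y) ∈ (u :: l').zip l') u v l := by
  have huniq : ∀ v l l', IsRisingWalk E lab u v l → IsRisingWalk E lab u v l' → l = l' :=
    fun v l _ hl hl' => (hER u v ⟨l, hl.1⟩).unique hl hl'
  intro v hv
  obtain ⟨m, hm, hm_unique⟩ : ∃! m, IsRisingWalk E lab u v m := hER u v hv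
  refine ⟨m, hm.isRisingTreeEdge_walk, fun l hl =>
    hm_unique l (isRisingWalk_nil.append_of_isRisingTreeEdge_walk huniq hl)⟩

theorem ER_labeling_source_tree {V : Type*} [Fintype V]
    (E : V → V → Prop) (lab : V → V → ℕ)
    (hacyclic : ∀ (u : V) (l : List V), DWalk E u u l → l = [])
    (hER : ∀ u v : V, (∃ l, DWalk E u v l) →
      ∃! l, DWalk E u v l ∧ List.Chain' (· < ·) (wLabels lab u l))
    (u : V) :
    ∀ v : V, (∃ l, DWalk E u v l) →
      ∃! l : List V,
        DWalk (fun x y => E x y ∧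
          ∃ (v' : V) (l' : List V), DWalk E u v' l' ∧
            List.Chain' (· < ·) (wLabels lab u l') ∧ (x, y) ∈ (u :: l').zip l') u v l :=
  ER_labeling_source_tree_general E lab hER u
end

section
/- Let λ be an EL-labeling of a finite poset P. Then for all u ≤ v in P, the Möbius function satisfies μ(u,v) = e(u,v) − o(u,v), where e(u,v) (resp. o(u,v)) is the number of even-length (resp. odd-length) λ-falling maximal chains from u to v in the Hasse diagram of P. -/
/-!
Björner–Wachs: if `λ` is an EL-labeling of a finite poset `P`, then for `u ≤ v`
the Möbius function satisfies `μ(u,v) = e(u,v) − o(u,v)`, where `e` (resp. `o`)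
counts even-length (resp. odd-length) `λ`-falling maximal chains from `u` to `v`
in the Hasse diagram of `P`.
-/

open scoped Classical

namespace ELaux

variable {α : Type*} {E : α → α → Prop}

lemma dwalk_nil_inv {u v : α} (h : DWalk E u v []) : u = v := by cases h; rfl

lemma dwalk_snoc {u w z : α} {l : List α} (h : DWalk E u w l) (he : E w z) :
    DWalk E u z (l ++ [z]) := by
  induction h with
  | nil => exact DWalk.cons he (DWalk.nil z)
  | cons h1 h2 ih => exact DWalk.cons h1 (ih he)

lemma dwalk_getLast {u v : α} {l : List α} (h : DWalk E u v l) :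
    (u :: l).getLast (List.cons_ne_nil _ _) = v := by
  induction h with
  | nil => rfl
  | cons h1 h2 ih => rw [← ih]; exact (List.getLast_cons (List.cons_ne_nil _ _)).symm ▸ rfl

lemma dwalk_getLast? {u v : α} {l : List α} (h : DWalk E u v l) :
    (u :: l).getLast? = some v := by
  induction h with
  | nil => rfl
  | cons h1 h2 ih => rw [← ih]; exact List.getLast?_cons_cons ..

lemma dwalk_snoc_cases {u v : α} {l : List α} (h : DWalk E u v l) :
    l = [] ∨ ∃ l' w, l = l' ++ [v] ∧ DWalk E u w l' ∧ E w v := by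
  induction h with
  | nil => exact Or.inl rfl
  | cons h1 h2 ih =>
    right
    rcases ih with rfl | ⟨l', x, rfl, hw, he⟩
    · exact ⟨[], _, by rw [dwalk_nil_inv h2] at h1 ⊢; rfl, DWalk.nil _, by
        rwa [dwalk_nil_inv h2] at h1⟩
    · exact ⟨_ :: l', x, rfl, DWalk.cons h1 hw, he⟩

section Order
variable {P : Type*} [PartialOrder P]

lemma dwalk_le {u v : P} {l : List P} (h : DWalk (· ⋖ ·) u v l) : u ≤ v := by
  induction h with
  | nil => exact le_rfl
  | cons h1 _ ih => exact (h1.lt).le.trans ih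

lemma dwalk_lt {u v : P} {l : List P} (h : DWalk (· ⋖ ·) u v l) (hl : l ≠ []) : u < v := by
  cases h with
  | nil => exact absurd rfl hl
  | cons h1 h2 => exact h1.lt.trans_le (dwalk_le h2)

lemma dwalk_chain {u v : P} {l : List P} (h : DWalk (· ⋖ ·) u v l) :
    List.Chain' (· < ·) (u :: l) := by
  induction h with
  | nil => exact List.isChain_singleton _
  | cons h1 _ ih => exact List.isChain_cons_cons.mpr ⟨h1.lt, ih⟩

lemma dwalk_finite [Fintype P] (u v : P) : {l : List P | DWalk (· ⋖ ·) u v l}.Finite := by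
  apply Set.Finite.subset (List.finite_length_le P (Fintype.card P))
  intro l hl
  have h1 : (u :: l).Nodup :=
    (List.isChain_iff_pairwise.mp (dwalk_chain hl)).imp (fun h => ne_of_lt h)
  have := h1.length_le_card
  simp only [List.length_cons] at this
  exact Set.mem_setOf_eq ▸ le_trans (Nat.le_succ _) this

end Order

lemma wLabels_cons (lab : α → α → ℕ) (u w : α) (l : List α) :
    wLabels lab u (w :: l) = lab u w :: wLabels lab w l := rfl

lemma wLabels_length (lab : α → α → ℕ) (u : α) (l : List α) :
    (wLabels lab u l).length = l.length := by
  simp [wLabels]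

lemma wLabels_eq_nil (lab : α → α → ℕ) (u : α) {l : List α}
    (h : wLabels lab u l = []) : l = [] := by
  have := wLabels_length lab u l
  rw [h] at this
  exact List.length_eq_zero_iff.mp this.symm

lemma wLabels_snoc (lab : α → α → ℕ) (u z : α) (l : List α) :
    wLabels lab u (l ++ [z]) =
      wLabels lab u l ++ [lab ((u :: l).getLast (List.cons_ne_nil _ _)) z] := by
  induction l generalizing u with
  | nil => rfl
  | cons a l ih =>
    show lab u a :: wLabels lab a (l ++ [z]) = _
    rw [ih a, wLabels_cons, List.cons_append, List.getLast_cons (List.cons_ne_nil _ _)]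

end ELaux


section Fall
open ELaux
variable {P : Type*} [PartialOrder P] [Fintype P] (lab : P → P → ℕ)

/-- The finite set of falling maximal chains from `u` to `v`. -/
noncomputable def fallSet (u v : P) : Finset (List P) :=
  ((dwalk_finite u v).subset (Set.sep_subset _ _) :
    {l : List P | DWalk (· ⋖ ·) u v l ∧ List.Chain' (· ≥ ·) (wLabels lab u l)}.Finite).toFinset

lemma mem_fallSet {u v : P} {l : List P} :
    l ∈ fallSet lab u v ↔ DWalk (· ⋖ ·) u v l ∧ List.Chain' (· ≥ ·) (wLabels lab u l) := by
  simp [fallSet]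

/-- Signed count of falling chains. -/
noncomputable def Fc (u v : P) : ℤ := ∑ l ∈ fallSet lab u v, (-1 : ℤ) ^ l.length

lemma fallSet_self (u : P) : fallSet lab u u = {[]} := by
  ext l
  simp only [mem_fallSet, Finset.mem_singleton]
  constructor
  · rintro ⟨h, -⟩
    by_contra hl
    exact lt_irrefl u (dwalk_lt h hl)
  · rintro rfl
    exact ⟨DWalk.nil u, List.isChain_nil⟩

lemma Fc_self (u : P) : Fc lab u u = 1 := by
  rw [Fc, fallSet_self]; simp

lemma Fc_eq (u v : P) :
    Fc lab u v =
      ({l : List P | DWalk (· ⋖ ·) u v l ∧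
          List.Chain' (· ≥ ·) (wLabels lab u l) ∧ Even l.length}.ncard : ℤ) -
      ({l : List P | DWalk (· ⋖ ·) u v l ∧
          List.Chain' (· ≥ ·) (wLabels lab u l) ∧ Odd l.length}.ncard : ℤ) := by
  have he : {l : List P | DWalk (· ⋖ ·) u v l ∧
      List.Chain' (· ≥ ·) (wLabels lab u l) ∧ Even l.length} =
      ↑((fallSet lab u v).filter fun l => Even l.length) := by
    ext l; simp [mem_fallSet, and_assoc]
  have ho : {l : List P | DWalk (· ⋖ ·) u v l ∧
      List.Chain' (· ≥ ·) (wLabels lab u l) ∧ Odd l.length} =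
      ↑((fallSet lab u v).filter fun l => ¬ Even l.length) := by
    ext l; simp [mem_fallSet, and_assoc, ← Nat.not_even_iff_odd]
  rw [he, ho, Set.ncard_coe_finset, Set.ncard_coe_finset, Fc,
    ← Finset.sum_filter_add_sum_filter_not (fallSet lab u v) (fun l => Even l.length)]
  rw [Finset.sum_congr rfl (fun l hl => (Finset.mem_filter.mp hl).2.neg_one_pow),
    Finset.sum_congr rfl (g := fun _ => (-1 : ℤ))
      (fun l hl => (Nat.not_even_iff_odd.mp (Finset.mem_filter.mp hl).2).neg_one_pow)]
  simp [mul_comm]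
  ring

end Fall

section Key
open ELaux List
variable {P : Type*} [PartialOrder P] [Fintype P] (lab : P → P → ℕ)

lemma key_involution {u v : P} (huv : u < v)
    (hE : ∀ w, w ≤ v → ∃! r, DWalk (· ⋖ ·) w v r ∧ List.Chain' (· < ·) (wLabels lab w r)) :
    ∑ w ∈ Finset.univ.filter (fun w => u ≤ w ∧ w ≤ v), Fc lab u w = 0 := by
  classical
  -- the rising chain to `v`
  set R : P → List P := fun w => if h : w ≤ v then (hE w h).choose else [] with hRdef
  have hRw : ∀ w (h : w ≤ v),
      DWalk (· ⋖ ·) w v (R w) ∧ List.Chain' (· < ·) (wLabels lab w (R w)) := by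
    intro w h
    simp only [hRdef, dif_pos h]
    exact (hE w h).choose_spec.1
  have hRu : ∀ w (h : w ≤ v) (r), DWalk (· ⋖ ·) w v r →
      List.Chain' (· < ·) (wLabels lab w r) → r = R w := by
    intro w h r h1 h2
    simp only [hRdef, dif_pos h]
    exact (hE w h).choose_spec.2 r ⟨h1, h2⟩
  have hRv : R v = [] := ((hRu v le_rfl [] (DWalk.nil v) List.isChain_nil)).symm
  set nxt : P → P := fun w => ((R w).head?).getD w with hnxtdef
  have hstep : ∀ w, w ≤ v → w ≠ v →
      w ⋖ nxt w ∧ nxt w ≤ v ∧ R w = nxt w :: R (nxt w) := by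
    intro w h hne
    obtain ⟨hw, hr⟩ := hRw w h
    have hnil : R w ≠ [] := fun hnil => hne (dwalk_nil_inv (hnil ▸ hw))
    obtain ⟨z, t, hzt⟩ := List.exists_cons_of_ne_nil hnil
    rw [hzt] at hw hr
    cases hw with
    | cons h1 h2 =>
      have hzv : z ≤ v := dwalk_le h2
      have hrt : List.Chain' (· < ·) (wLabels lab z t) := by
        rw [wLabels_cons] at hr; exact hr.tail
      have ht : t = R z := hRu z hzv t h2 hrt
      have hz : nxt w = z := by simp [hnxtdef, hzt]
      refine ⟨hz ▸ h1, hz ▸ hzv, ?_⟩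
      rw [hzt, hz, ht]
  have Rcons : ∀ x y, x ⋖ y → y ≤ v → (y = v ∨ lab x y < lab y (nxt y)) →
      R x = y :: R y := by
    intro x y hxy hyv hcond
    have hxv : x ≤ v := le_trans hxy.le hyv
    have hwalk : DWalk (· ⋖ ·) x v (y :: R y) := DWalk.cons hxy (hRw y hyv).1
    have hrise : List.Chain' (· < ·) (wLabels lab x (y :: R y)) := by
      rw [wLabels_cons]
      refine List.isChain_cons.mpr ⟨?_, (hRw y hyv).2⟩
      intro b hb
      by_cases hy : y = v
      · subst hy; rw [hRv] at hb; simp [wLabels] at hb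
      · rcases hcond with rfl | hlt
        · exact absurd rfl hy
        · obtain ⟨-, -, he⟩ := hstep y hyv hy
          rw [he, wLabels_cons] at hb
          simp only [List.head?_cons, Option.mem_def, Option.some.injEq] at hb
          exact hb ▸ hlt
    exact (hRu x hxv _ hwalk hrise).symm
  have nxt_eq : ∀ x y, R x = y :: R y → nxt x = y := by
    intro x y h; simp [hnxtdef, h]
  have riseStep : ∀ w, w ≤ v → w ≠ v → nxt w ≠ v →
      lab w (nxt w) < lab (nxt w) (nxt (nxt w)) := by
    intro w h hne hne2
    obtain ⟨hcov, hzv, he⟩ := hstep w h hne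
    have hr := (hRw w h).2
    rw [he, wLabels_cons] at hr
    obtain ⟨hc2, hz2, he2⟩ := hstep (nxt w) hzv hne2
    rw [he2, wLabels_cons] at hr
    exact (List.isChain_cons_cons.mp hr).1
  -- the involution
  set g : (Σ _ : P, List P) → (Σ _ : P, List P) := fun p =>
    if p.1 = v ∨ ∃ a, (wLabels lab u p.2).getLast? = some a ∧ a < lab p.1 (nxt p.1)
    then ⟨((u :: p.2.dropLast).getLast?).getD u, p.2.dropLast⟩
    else ⟨nxt p.1, p.2 ++ [nxt p.1]⟩ with hgdef
  set S : Finset ((_ : P) × List P) :=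
    (Finset.univ.filter fun w => u ≤ w ∧ w ≤ v).sigma (fun w => fallSet lab u w) with hSdef
  have memS : ∀ (w : P) (l : List P), (⟨w, l⟩ : Σ _ : P, List P) ∈ S ↔
      (u ≤ w ∧ w ≤ v) ∧ DWalk (· ⋖ ·) u w l ∧ List.Chain' (· ≥ ·) (wLabels lab u l) := by
    intro w l
    simp [hSdef, Finset.mem_sigma, mem_fallSet]
  have keyfacts : ∀ (w : P) (l : List P), (⟨w, l⟩ : Σ _ : P, List P) ∈ S →
      (g ⟨w, l⟩ ∈ S ∧ ((g ⟨w, l⟩).2.length + 1 = l.length ∨ (g ⟨w, l⟩).2.length = l.length + 1)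
        ∧ g (g ⟨w, l⟩) = ⟨w, l⟩) := by
    intro w l hmem
    obtain ⟨⟨huw, hwv⟩, hwalk, hfall⟩ := (memS w l).mp hmem
    by_cases hdc : w = v ∨ ∃ a, (wLabels lab u l).getLast? = some a ∧ a < lab w (nxt w)
    · -- drop case
      have hl : l ≠ [] := by
        rcases hdc with rfl | ⟨a, ha, -⟩
        · intro hnil; subst hnil; exact absurd (dwalk_nil_inv hwalk) (ne_of_lt huv)
        · intro hnil; subst hnil; simp [wLabels] at ha
      rcases dwalk_snoc_cases hwalk with rfl | ⟨l', x, rfl, hw', hcov⟩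
      · exact absurd rfl hl
      have hword : wLabels lab u (l' ++ [w]) = wLabels lab u l' ++ [lab x w] := by
        rw [wLabels_snoc, dwalk_getLast hw']
      have hgval : g ⟨w, l' ++ [w]⟩ = ⟨x, l'⟩ := by
        simp only [hgdef, if_pos hdc, List.dropLast_concat]
        rw [dwalk_getLast? hw']
        rfl
      have hcond : w = v ∨ lab x w < lab w (nxt w) := by
        rcases hdc with h | ⟨a, ha, hlt⟩
        · exact Or.inl h
        · right
          rw [hword, List.getLast?_concat] at ha
          obtain rfl : a = lab x w := (Option.some.injEq _ _).mp ha.symm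
          exact hlt
      have hRx : R x = w :: R w := Rcons x w hcov hwv hcond
      have hnx : nxt x = w := nxt_eq x w hRx
      have hxv : x ≤ v := le_trans hcov.le hwv
      have hxltv : x < v := lt_of_lt_of_le hcov.lt hwv
      have hfall' : List.Chain' (· ≥ ·) (wLabels lab u l') := by
        rw [hword] at hfall
        exact (List.isChain_append.mp hfall).1
      have hlastge : ∀ a ∈ (wLabels lab u l').getLast?, lab x w ≤ a := by
        rw [hword] at hfall
        intro a ha
        exact (List.isChain_append.mp hfall).2.2 a ha (lab x w) rfl
      have hmem2 : (⟨x, l'⟩ : Σ _ : P, List P) ∈ S :=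
        (memS x l').mpr ⟨⟨dwalk_le hw', hxv⟩, hw', hfall'⟩
      have hnotdc : ¬ (x = v ∨ ∃ a, (wLabels lab u l').getLast? = some a ∧
          a < lab x (nxt x)) := by
        rintro (rfl | ⟨a, ha, hlt⟩)
        · exact absurd rfl (ne_of_lt hxltv)
        · rw [hnx] at hlt
          exact absurd hlt (not_lt.mpr (hlastge a ha))
      have hgg : g ⟨x, l'⟩ = ⟨w, l' ++ [w]⟩ := by
        simp only [hgdef, if_neg hnotdc]
        rw [hnx]
      refine ⟨hgval ▸ hmem2, Or.inl ?_, by rw [hgval, hgg]⟩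
      rw [hgval]
      simp
    · -- extend case
      have hwnev : w ≠ v := fun h => hdc (Or.inl h)
      obtain ⟨hcov, hzv, hRweq⟩ := hstep w hwv hwnev
      have hgval : g ⟨w, l⟩ = ⟨nxt w, l ++ [nxt w]⟩ := by
        simp only [hgdef, if_neg hdc]
      have hword : wLabels lab u (l ++ [nxt w]) = wLabels lab u l ++ [lab w (nxt w)] := by
        rw [wLabels_snoc, dwalk_getLast hwalk]
      have hwalk2 : DWalk (· ⋖ ·) u (nxt w) (l ++ [nxt w]) := dwalk_snoc hwalk hcov
      have hfall2 : List.Chain' (· ≥ ·) (wLabels lab u (l ++ [nxt w])) := by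
        rw [hword]
        refine List.isChain_append.mpr ⟨hfall, List.isChain_singleton _, ?_⟩
        intro a ha b hb
        obtain rfl : b = lab w (nxt w) := (Option.some.injEq _ _).mp hb.symm
        by_contra hab
        exact hdc (Or.inr ⟨a, ha, not_le.mp (fun h => hab h)⟩)
      have hmem2 : (⟨nxt w, l ++ [nxt w]⟩ : Σ _ : P, List P) ∈ S :=
        (memS _ _).mpr ⟨⟨le_trans huw hcov.le, hzv⟩, hwalk2, hfall2⟩
      have hdc2 : nxt w = v ∨ ∃ a, (wLabels lab u (l ++ [nxt w])).getLast? = some a ∧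
          a < lab (nxt w) (nxt (nxt w)) := by
        by_cases hzv' : nxt w = v
        · exact Or.inl hzv'
        · right
          refine ⟨lab w (nxt w), ?_, riseStep w hwv hwnev hzv'⟩
          rw [hword, List.getLast?_concat]
      have hgg : g ⟨nxt w, l ++ [nxt w]⟩ = ⟨w, l⟩ := by
        simp only [hgdef, if_pos hdc2, List.dropLast_concat]
        rw [dwalk_getLast? hwalk]
        rfl
      refine ⟨hgval ▸ hmem2, Or.inr ?_, by rw [hgval, hgg]⟩
      rw [hgval]
      simp
  -- apply the involution
  have : ∑ p ∈ S, (-1 : ℤ) ^ p.2.length = 0 := by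
    refine Finset.sum_involution (fun p _ => g p) ?_ ?_ (fun p hp => (keyfacts p.1 p.2 hp).1) ?_
    · rintro ⟨w, l⟩ hp
      obtain ⟨hmem, hlen, -⟩ := keyfacts w l hp
      rcases hlen with h | h
      · have h' : l.length = (g ⟨w, l⟩).2.length + 1 := h.symm
        show (-1 : ℤ) ^ l.length + (-1 : ℤ) ^ (g ⟨w, l⟩).2.length = 0
        rw [h', pow_succ]; ring
      · show (-1 : ℤ) ^ l.length + (-1 : ℤ) ^ (g ⟨w, l⟩).2.length = 0
        rw [h, pow_succ]; ring
    · rintro ⟨w, l⟩ hp -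
      obtain ⟨-, hlen, -⟩ := keyfacts w l hp
      intro heq
      have heq' : g ⟨w, l⟩ = ⟨w, l⟩ := heq
      have h2 : (g ⟨w, l⟩).2.length = l.length := by rw [heq']
      omega
    · rintro ⟨w, l⟩ hp
      exact (keyfacts w l hp).2.2
  rw [← this, hSdef, Finset.sum_sigma]
  rfl

end Key

theorem EL_labeling_moebius {P : Type*} [PartialOrder P] [Fintype P]
    (lab : P → P → ℕ)
    -- `lab` is an EL-labeling of the Hasse diagram of `P` (whose edges are the
    -- cover relations `· ⋖ ·`): between any comparable pair there is a unique rising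
    -- maximal chain, which is lexicographically first among all maximal chains.
    (hEL : ∀ u v : P, u ≤ v →
      ∃ l : List P,
        (DWalk (· ⋖ ·) u v l ∧ List.Chain' (· < ·) (wLabels lab u l) ∧
          ∀ l' : List P, DWalk (· ⋖ ·) u v l' →
            List.Lex (· < ·) (wLabels lab u l) (wLabels lab u l') ∨
              wLabels lab u l = wLabels lab u l') ∧
        ∀ l' : List P,
          DWalk (· ⋖ ·) u v l' ∧ List.Chain' (· < ·) (wLabels lab u l') → l' = l)
    -- `μ` is the Möbius function of `P`.
    (μ : P → P → ℤ)
    (hrefl : ∀ u, μ u u = 1)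
    (hrec : ∀ u v : P, u < v →
      μ u v = -∑ w ∈ Finset.univ.filter (fun w => u ≤ w ∧ w < v), μ u w)
    (hzero : ∀ u v : P, ¬u ≤ v → μ u v = 0) :
    ∀ u v : P, u ≤ v →
      μ u v =
        ({l : List P | DWalk (· ⋖ ·) u v l ∧
            List.Chain' (· ≥ ·) (wLabels lab u l) ∧ Even l.length}.ncard : ℤ) -
        ({l : List P | DWalk (· ⋖ ·) u v l ∧
            List.Chain' (· ≥ ·) (wLabels lab u l) ∧ Odd l.length}.ncard : ℤ) := by
  have hFc : ∀ u v : P, u ≤ v → μ u v = Fc lab u v := by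
    intro u v
    induction v using (wellFounded_lt (α := P)).induction with
    | _ v IH =>
      intro huv
      rcases eq_or_lt_of_le huv with rfl | hlt
      · rw [hrefl, Fc_self]
      · have hEv : ∀ w, w ≤ v → ∃! r, DWalk (· ⋖ ·) w v r ∧
            List.Chain' (· < ·) (wLabels lab w r) := by
          intro w h
          obtain ⟨r, ⟨h1, h2, -⟩, h4⟩ := hEL w v h
          exact ⟨r, ⟨h1, h2⟩, fun r' hr' => h4 r' hr'⟩
        have hkey := key_involution lab hlt hEv
        have hsplit : Finset.univ.filter (fun w => u ≤ w ∧ w ≤ v) =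
            insert v (Finset.univ.filter (fun w => u ≤ w ∧ w < v)) := by
          ext w
          simp only [Finset.mem_insert, Finset.mem_filter, Finset.mem_univ, true_and]
          constructor
          · rintro ⟨h1, h2⟩
            rcases lt_or_eq_of_le h2 with h3 | rfl
            · exact Or.inr ⟨h1, h3⟩
            · exact Or.inl rfl
          · rintro (rfl | ⟨h1, h2⟩)
            · exact ⟨hlt.le, le_rfl⟩
            · exact ⟨h1, h2.le⟩
        have hv_not : v ∉ Finset.univ.filter (fun w => u ≤ w ∧ w < v) := by simp
        rw [hsplit, Finset.sum_insert hv_not] at hkey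
        have hsum_eq : ∑ w ∈ Finset.univ.filter (fun w => u ≤ w ∧ w < v), μ u w =
            ∑ w ∈ Finset.univ.filter (fun w => u ≤ w ∧ w < v), Fc lab u w :=
          Finset.sum_congr rfl fun w hw => by
            obtain ⟨h1, h2⟩ := (Finset.mem_filter.mp hw).2
            exact IH w h2 h1
        rw [hrec u v hlt, hsum_eq]
        linarith [hkey]
  intro u v huv
  rw [hFc u v huv, Fc_eq]
end

section
/- Let Q = q₁⋯q_m be a word in the generators of a finite Coxeter system (W,S) and ρ ∈ W. Then the set of facets of the subword complex SC(Q,ρ) decomposes as: F(Q,ρ) = F(Q', ρq_m) if ρ has no reduced expression as a subword of Q' (where Q' = q₁⋯q_{m−1}); F(Q,ρ) = {I ∪ {m} : I ∈ F(Q', ρ)} if ℓ(ρq_m) > ℓ(ρ); and F(Q,ρ) = F(Q', ρq_m) ⊔ {I ∪ {m} : I ∈ F(Q', ρ)} otherwise. -/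
/-!
A facet `I` of `SC(Q, ρ)` either contains the last position, and then `I` minus it is a facet of
`SC(Q', ρ)`, or it does not, and then the reduced word for `ρ` read off the complement ends
with `q`, so that `I` is a facet of `SC(Q', ρq)` and `ℓ(ρq) < ℓ(ρ)`. This gives all three cases
except for one point in (i): a facet of `SC(Q', ρq)` forces `ℓ(ρq) < ℓ(ρ)` when `ρ` has no
reduced subword in `Q'`, since otherwise `q` is a right descent of `ρq`, and by the exchange
property deleting one letter of a reduced subword for `ρq` gives a reduced subword for `ρ`.

The exchange property comes from the action of `W` on `W × ℤˣ` in which `s` acts by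
`(t, ε) ↦ (s t s, ±ε)`, the sign flipping exactly when `t = s`: it shows that the parity of the
number of occurrences of a reflection in the right inversion sequence of a word depends only on
the element the word represents.
-/

/-- A facet of the subword complex `SC(Q, ρ)`: a set of positions whose complement is
a reduced expression for `ρ` as a subword of `Q`. -/
def IsSCFacet {B W : Type*} [Group W] {M : CoxeterMatrix B} (cs : CoxeterSystem M W)
    {m : ℕ} (Q : Fin m → B) (ρ : W) (I : Finset (Fin m)) : Prop :=
  cs.wordProd ((Iᶜ.sort (· ≤ ·)).map Q) = ρ ∧ Iᶜ.card = cs.length ρ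

namespace CoxeterSystem

variable {B W : Type*} [Group W] {M : CoxeterMatrix B} (cs : CoxeterSystem M W)

local prefix:100 "s" => cs.simple
local prefix:100 "π" => cs.wordProd
local prefix:100 "ris " => cs.rightInvSeq

theorem simple_mul_simple_mul_pow (i j : B) (n : ℕ) :
    s j * (s i * s j) ^ n = ((s i * s j)⁻¹) ^ n * s j := by
  have h : SemiconjBy (s j) (s i * s j) (s i * s j)⁻¹ := by
    simp [SemiconjBy, mul_assoc]
  exact (h.pow_right n).eq

section SignedConj

variable [DecidableEq W]

def signedConj (i : B) : Function.End (W × ℤˣ) :=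
  fun p => (s i * p.1 * s i, (if p.1 = s i then -1 else 1) * p.2)

theorem signedConj_smul (i : B) (t : W) (ε : ℤˣ) :
    cs.signedConj i • (t, ε) = (s i * t * s i, (if t = s i then -1 else 1) * ε) := rfl

theorem signedConj_mul_pow_smul (i j : B) (n : ℕ) (t : W) (ε : ℤˣ) :
    (cs.signedConj i * cs.signedConj j) ^ n • (t, ε) =
      ((s i * s j) ^ n * t * ((s i * s j)⁻¹) ^ n,
        (∏ k ∈ Finset.range (2 * n), if t = ((s i * s j)⁻¹) ^ k * s j then -1 else 1) * ε) := by
  induction n with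
  | zero => simp
  | succ n ih =>
    set a := s i * s j with ha
    have conj_eq_iff (y : W) : a ^ n * t * (a⁻¹) ^ n = y ↔ t = (a⁻¹) ^ n * y * a ^ n := by
      rw [inv_pow]; constructor <;> rintro rfl <;> group
    have flips_at_j : a ^ n * t * (a⁻¹) ^ n = s j ↔ t = (a⁻¹) ^ (2 * n) * s j := by
      rw [conj_eq_iff, mul_assoc, simple_mul_simple_mul_pow, ← mul_assoc, ← pow_add, two_mul]
    have flips_at_i : s j * (a ^ n * t * (a⁻¹) ^ n) * s j = s i ↔
        t = (a⁻¹) ^ (2 * n + 1) * s j := by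
      have h : s j * (a ^ n * t * (a⁻¹) ^ n) * s j = s i ↔
          a ^ n * t * (a⁻¹) ^ n = a⁻¹ * s j := by
        rw [show a⁻¹ * s j = s j * s i * s j by simp [ha, mul_assoc]]
        constructor <;> rintro h
        · rw [← h]; simp [mul_assoc]
        · rw [h]; simp [mul_assoc]
      rw [h, conj_eq_iff, ← mul_assoc, ← pow_succ, mul_assoc, simple_mul_simple_mul_pow,
        ← mul_assoc, ← pow_add, show n + 1 + n = 2 * n + 1 by omega]
    rw [pow_succ', mul_smul, ih, mul_smul, signedConj_smul, signedConj_smul]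
    refine Prod.ext ?_ ?_
    · rw [pow_succ' a, pow_succ a⁻¹]
      simp only [ha, mul_inv_rev, inv_simple, mul_assoc]
    · simp only [flips_at_j, flips_at_i, show 2 * (n + 1) = 2 * n + 1 + 1 by ring,
        Finset.prod_range_succ]
      ac_rfl

theorem isLiftable_signedConj : M.IsLiftable cs.signedConj := by
  intro i j
  funext ⟨t, ε⟩
  have ha : (s i * s j) ^ M i j = 1 := cs.simple_mul_simple_pow i j
  -- the reflections `(s i * s j)⁻¹ ^ k * s j`, `k < 2 * M i j`, repeat with period `M i j`
  have hperiod (k : ℕ) : ((s i * s j)⁻¹) ^ (M i j + k) = ((s i * s j)⁻¹) ^ k := by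
    rw [pow_add, inv_pow, ha, inv_one, one_mul]
  change (cs.signedConj i * cs.signedConj j) ^ M i j • (t, ε) = (t, ε)
  rw [signedConj_mul_pow_smul, inv_pow, ha, two_mul, Finset.prod_range_add]
  simp only [hperiod, ← sq, Int.units_sq, one_mul, mul_one, inv_one]

noncomputable def signedConjRep : W →* Function.End (W × ℤˣ) :=
  cs.lift ⟨cs.signedConj, cs.isLiftable_signedConj⟩

theorem signedConjRep_wordProd_smul (ω : List B) (t : W) (ε : ℤˣ) :
    cs.signedConjRep (π ω) • (t, ε) = (π ω * t * (π ω)⁻¹, (-1) ^ (ris ω).count t * ε) := by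
  induction ω with
  | nil => simp
  | cons i α ih =>
    have reflection_eq : π α * t * (π α)⁻¹ = s i ↔ (π α)⁻¹ * s i * π α = t := by
      constructor <;> intro h <;> rw [← h] <;> group
    rw [wordProd_cons, map_mul, mul_smul, ih, signedConjRep, lift_apply_simple, signedConj_smul,
      rightInvSeq, List.count_cons]
    refine Prod.ext (by simp [mul_assoc]) ?_
    by_cases h : (π α)⁻¹ * s i * π α = t <;> simp [h, reflection_eq, pow_succ]

theorem neg_one_pow_count_rightInvSeq_congr {ω ω' : List B} (h : π ω = π ω') (t : W) :
    (-1 : ℤˣ) ^ (ris ω).count t = (-1) ^ (ris ω').count t := by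
  have h' := cs.signedConjRep_wordProd_smul ω t 1
  rw [h, signedConjRep_wordProd_smul] at h'
  simpa using (congrArg Prod.snd h').symm

end SignedConj

theorem simple_mem_rightInvSeq_of_isRightDescent {ω : List B} {i : B}
    (h : cs.IsRightDescent (π ω) i) : s i ∈ ris ω := by
  classical
  obtain ⟨α, hα, hαω⟩ := cs.exists_isReduced (π ω * s i)
  -- `s i` occurs exactly once in the right inversion sequence of the word `α ++ [i]` for `π ω`
  have hword : π (α.concat i) = π ω := by
    rw [wordProd_concat, ← hαω, simple_mul_simple_cancel_right]
  have hnotMem : s i ∉ ris α := fun hmem => by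
    have := (cs.isRightInversion_of_mem_rightInvSeq hα hmem).2
    rw [← hαω, simple_mul_simple_cancel_right] at this
    exact lt_asymm h this
  have hcount : (ris (α.concat i)).count (s i) = 1 := by
    rw [rightInvSeq_concat, List.concat_eq_append, List.count_append, List.count_singleton_self,
      List.count_eq_zero.mpr]
    simp only [List.mem_map, MulAut.conj_apply, inv_simple, not_exists, not_and]
    intro x hx hconj
    rw [mul_eq_right, mul_eq_one_iff_inv_eq, inv_simple] at hconj
    exact hnotMem (hconj ▸ hx)
  by_contra hnm
  have := cs.neg_one_pow_count_rightInvSeq_congr hword (s i)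
  rw [hcount, List.count_eq_zero_of_not_mem hnm] at this
  simp at this

theorem exists_wordProd_eraseIdx_of_isRightDescent {ω : List B} {i : B}
    (h : cs.IsRightDescent (π ω) i) : ∃ j < ω.length, π (ω.eraseIdx j) = π ω * s i := by
  obtain ⟨j, hj, hget⟩ := List.getElem_of_mem (cs.simple_mem_rightInvSeq_of_isRightDescent h)
  rw [length_rightInvSeq] at hj
  refine ⟨j, hj, ?_⟩
  rw [← wordProd_mul_getD_rightInvSeq, List.getD_eq_getElem _ _ (by simpa), hget]

theorem exists_isReduced_sublist_of_isRightDescent {ω : List B} (hω : cs.IsReduced ω) {i : B}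
    (h : cs.IsRightDescent (π ω) i) :
    ∃ ω', ω'.Sublist ω ∧ cs.IsReduced ω' ∧ π ω' = π ω * s i := by
  obtain ⟨j, hj, hω'⟩ := cs.exists_wordProd_eraseIdx_of_isRightDescent h
  refine ⟨ω.eraseIdx j, ω.eraseIdx_sublist j, ?_, hω'⟩
  have hlength : (ω.eraseIdx j).length + 1 = ω.length := by
    rw [List.length_eraseIdx_of_lt hj]; omega
  have hle := cs.length_wordProd_le (ω.eraseIdx j)
  have := cs.length_mul_simple (π ω) i
  unfold IsReduced IsRightDescent at *
  rw [hω'] at hle ⊢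
  omega

end CoxeterSystem

namespace Finset

theorem sort_insert_of_forall_lt {α : Type*} [LinearOrder α] {s : Finset α} {a : α}
    (h : ∀ b ∈ s, b < a) : (insert a s).sort = s.sort ++ [a] := by
  have hnotMem : a ∉ s := fun ha => lt_irrefl a (h a ha)
  have htoFinset : (s.sort ++ [a]).toFinset = insert a s := by
    ext; simp
  rw [← htoFinset, List.toFinset_sort]
  · simpa [List.pairwise_append] using fun b hb => (h b hb).le
  · simpa [List.nodup_append] using hnotMem

end Finset

namespace Fin

variable {m : ℕ}

theorem sort_image_castSucc (S : Finset (Fin m)) :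
    (S.image castSucc).sort = S.sort.map castSucc := by
  have := StrictMonoOn.map_finsetSort castSuccEmb S (strictMono_castSucc.strictMonoOn _)
  simpa [Finset.map_eq_image] using this.symm

theorem compl_image_castSucc (S : Finset (Fin m)) :
    (S.image castSucc)ᶜ = insert (last m) (Sᶜ.image castSucc) := by
  ext x
  cases x using lastCases <;> simp [castSucc_ne_last]

theorem compl_insert_last_image_castSucc (S : Finset (Fin m)) :
    (insert (last m) (S.image castSucc))ᶜ = Sᶜ.image castSucc := by
  rw [← compl_compl S, ← compl_image_castSucc, compl_compl, compl_compl]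

theorem last_notMem_image_castSucc (S : Finset (Fin m)) : last m ∉ S.image castSucc := by
  simp [(castSucc_lt_last _).ne]

theorem exists_image_castSucc_eq_erase_last (I : Finset (Fin (m + 1))) :
    ∃ S : Finset (Fin m), S.image castSucc = I.erase (last m) := by
  refine ⟨I.preimage castSucc (castSucc_injective m).injOn, ?_⟩
  ext x
  cases x using lastCases <;> simp [(castSucc_lt_last _).ne]

end Fin

section SubwordComplex

variable {B W : Type*} [Group W] {M : CoxeterMatrix B} (cs : CoxeterSystem M W) {m : ℕ}

theorem isSCFacet_insert_last_iff (Q : Fin (m + 1) → B) (ρ : W) (S : Finset (Fin m)) :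
    IsSCFacet cs Q ρ (insert (Fin.last m) (S.image Fin.castSucc)) ↔
      IsSCFacet cs (Fin.init Q) ρ S := by
  rw [IsSCFacet, Fin.compl_insert_last_image_castSucc, Fin.sort_image_castSucc, List.map_map,
    Finset.card_image_of_injective _ (Fin.castSucc_injective m)]
  rfl

theorem isSCFacet_image_castSucc_iff (Q : Fin (m + 1) → B) (ρ : W) (S : Finset (Fin m)) :
    IsSCFacet cs Q ρ (S.image Fin.castSucc) ↔
      IsSCFacet cs (Fin.init Q) (ρ * cs.simple (Q (Fin.last m))) S ∧
        cs.IsRightDescent ρ (Q (Fin.last m)) := by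
  have hsort : ((S.image Fin.castSucc)ᶜ.sort).map Q =
      (Sᶜ.sort).map (Fin.init Q) ++ [Q (Fin.last m)] := by
    rw [Fin.compl_image_castSucc, Finset.sort_insert_of_forall_lt, Fin.sort_image_castSucc,
      List.map_append, List.map_map]
    · rfl
    · simp [Fin.castSucc_lt_last]
  have hcard : (S.image Fin.castSucc)ᶜ.card = Sᶜ.card + 1 := by
    rw [Fin.compl_image_castSucc, Finset.card_insert_of_notMem (Fin.last_notMem_image_castSucc _),
      Finset.card_image_of_injective _ (Fin.castSucc_injective m)]
  have hword_iff : cs.wordProd ((Sᶜ.sort).map (Fin.init Q)) * cs.simple (Q (Fin.last m)) = ρ ↔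
      cs.wordProd ((Sᶜ.sort).map (Fin.init Q)) = ρ * cs.simple (Q (Fin.last m)) := by
    constructor <;> intro h
    · rw [← h, CoxeterSystem.simple_mul_simple_cancel_right]
    · rw [h, CoxeterSystem.simple_mul_simple_cancel_right]
  have hle := cs.length_wordProd_le ((Sᶜ.sort).map (Fin.init Q))
  have := cs.length_mul_simple ρ (Q (Fin.last m))
  rw [List.length_map, Finset.length_sort] at hle
  rw [IsSCFacet, IsSCFacet, hsort, hcard, CoxeterSystem.wordProd_append,
    CoxeterSystem.wordProd_singleton, hword_iff, CoxeterSystem.IsRightDescent]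
  constructor
  · rintro ⟨hword, hcard⟩
    rw [← hword] at this ⊢
    exact ⟨⟨rfl, by omega⟩, by omega⟩
  · rintro ⟨⟨hword, hcard⟩, hlt⟩
    exact ⟨hword, by omega⟩

theorem IsSCFacet.exists_isSCFacet_mul_simple {Q : Fin m → B} {w : W} {I : Finset (Fin m)}
    (hI : IsSCFacet cs Q w I) {i : B} (hi : cs.IsRightDescent w i) :
    ∃ J, IsSCFacet cs Q (w * cs.simple i) J := by
  obtain ⟨hword, hcard⟩ := hI
  have hred : cs.IsReduced ((Iᶜ.sort).map Q) := by
    rw [CoxeterSystem.IsReduced, hword, List.length_map, Finset.length_sort, hcard]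
  obtain ⟨ω, hsub, hωred, hω⟩ :=
    cs.exists_isReduced_sublist_of_isRightDescent hred (hword ▸ hi)
  obtain ⟨l, hl, rfl⟩ := List.sublist_map_iff.mp hsub
  have hnodup : l.Nodup := hl.nodup (Finset.sort_nodup _ _)
  have hsort : l.toFinset.sort = l :=
    (List.toFinset_sort _ hnodup).mpr ((Finset.pairwise_sort _ _).sublist hl)
  refine ⟨l.toFinsetᶜ, ?_, ?_⟩
  · rw [compl_compl, hsort, hω, hword]
  · rw [compl_compl, List.toFinset_card_of_nodup hnodup, ← hword, ← hω, hωred, List.length_map]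

theorem isRightDescent_of_isSCFacet_mul_simple {Q : Fin m → B} {w : W} {i : B}
    {I : Finset (Fin m)} (hI : IsSCFacet cs Q (w * cs.simple i) I)
    (hw : ¬∃ J, IsSCFacet cs Q w J) : cs.IsRightDescent w i := by
  rw [cs.isRightDescent_iff_not_isRightDescent_mul]
  intro hdesc
  simpa [hw] using hI.exists_isSCFacet_mul_simple cs hdesc

theorem isSCFacet_iff_init (Q : Fin (m + 1) → B) (ρ : W) (I : Finset (Fin (m + 1))) :
    IsSCFacet cs Q ρ I ↔
      (∃ S, IsSCFacet cs (Fin.init Q) (ρ * cs.simple (Q (Fin.last m))) S ∧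
        cs.IsRightDescent ρ (Q (Fin.last m)) ∧ I = S.image Fin.castSucc) ∨
      ∃ S, IsSCFacet cs (Fin.init Q) ρ S ∧ I = insert (Fin.last m) (S.image Fin.castSucc) := by
  constructor
  · intro hI
    obtain ⟨S, hS⟩ := Fin.exists_image_castSucc_eq_erase_last I
    by_cases hlast : Fin.last m ∈ I
    · rw [← Finset.insert_erase hlast, ← hS, isSCFacet_insert_last_iff] at hI
      exact Or.inr ⟨S, hI, by rw [hS, Finset.insert_erase hlast]⟩
    · rw [← Finset.erase_eq_of_notMem hlast, ← hS, isSCFacet_image_castSucc_iff] at hI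
      exact Or.inl ⟨S, hI.1, hI.2, by rw [hS, Finset.erase_eq_of_notMem hlast]⟩
  · rintro (⟨S, hS, hdesc, rfl⟩ | ⟨S, hS, rfl⟩)
    · exact (isSCFacet_image_castSucc_iff cs Q ρ S).mpr ⟨hS, hdesc⟩
    · exact (isSCFacet_insert_last_iff cs Q ρ S).mpr hS

end SubwordComplex

theorem subword_complex_facets_induction_general {B W : Type*} [Group W]
    {M : CoxeterMatrix B} (cs : CoxeterSystem M W)
    {m : ℕ} (Q : Fin (m + 1) → B) (ρ : W) :
    -- `Q'` is the word `Q` with its last letter deleted, and `q` is the last letter of `Q`.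
    ∀ Q' : Fin m → B, Q' = (fun k => Q k.castSucc) →
    ∀ q : W, q = cs.simple (Q (Fin.last m)) →
    -- (i) if `ρ` has no reduced expression as a subword of `Q'`:
    ((¬∃ I, IsSCFacet cs Q' ρ I) →
      {I | IsSCFacet cs Q ρ I} =
        {J | ∃ I, IsSCFacet cs Q' (ρ * q) I ∧ J = I.image Fin.castSucc}) ∧
    -- (ii) if `ℓ(ρq) > ℓ(ρ)`:
    (cs.length ρ < cs.length (ρ * q) →
      {I | IsSCFacet cs Q ρ I} =
        {J | ∃ I, IsSCFacet cs Q' ρ I ∧ J = insert (Fin.last m) (I.image Fin.castSucc)}) ∧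
    -- (iii) otherwise, the disjoint union of the two:
    ((∃ I, IsSCFacet cs Q' ρ I) → cs.length (ρ * q) < cs.length ρ →
      {I | IsSCFacet cs Q ρ I} =
        {J | ∃ I, IsSCFacet cs Q' (ρ * q) I ∧ J = I.image Fin.castSucc} ∪
        {J | ∃ I, IsSCFacet cs Q' ρ I ∧ J = insert (Fin.last m) (I.image Fin.castSucc)} ∧
      Disjoint {J | ∃ I, IsSCFacet cs Q' (ρ * q) I ∧ J = I.image Fin.castSucc}
        {J | ∃ I, IsSCFacet cs Q' ρ I ∧ J = insert (Fin.last m) (I.image Fin.castSucc)}) := by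
  rintro Q' rfl q rfl
  refine ⟨fun hρ => ?_, fun hlt => ?_, fun _ hdesc => ⟨?_, ?_⟩⟩
  · ext I
    refine (isSCFacet_iff_init cs Q ρ I).trans ⟨?_, ?_⟩
    · rintro (⟨S, hS, -, rfl⟩ | ⟨S, hS, -⟩)
      · exact ⟨S, hS, rfl⟩
      · exact absurd ⟨S, hS⟩ hρ
    · rintro ⟨S, hS, rfl⟩
      exact Or.inl ⟨S, hS, isRightDescent_of_isSCFacet_mul_simple cs hS hρ, rfl⟩
  · have hdesc : ¬cs.IsRightDescent ρ (Q (Fin.last m)) := hlt.asymm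
    ext I
    simp only [Set.mem_ofPred_eq, isSCFacet_iff_init, hdesc, false_and, and_false, exists_false,
      false_or]
    rfl
  · ext I
    simp only [Set.mem_ofPred_eq, Set.mem_union, isSCFacet_iff_init, CoxeterSystem.IsRightDescent,
      hdesc, true_and]
    rfl
  · rw [Set.disjoint_left]
    rintro _ ⟨S, -, rfl⟩ ⟨T, -, hST⟩
    exact Fin.last_notMem_image_castSucc S (hST ▸ Finset.mem_insert_self _ _)

theorem subword_complex_facets_induction {B W : Type*} [Group W] [Finite W]
    {M : CoxeterMatrix B} (cs : CoxeterSystem M W)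
    {m : ℕ} (Q : Fin (m + 1) → B) (ρ : W) :
    -- `Q'` is the word `Q` with its last letter deleted, and `q` is the last letter of `Q`.
    ∀ Q' : Fin m → B, Q' = (fun k => Q k.castSucc) →
    ∀ q : W, q = cs.simple (Q (Fin.last m)) →
    -- (i) if `ρ` has no reduced expression as a subword of `Q'`:
    ((¬∃ I, IsSCFacet cs Q' ρ I) →
      {I | IsSCFacet cs Q ρ I} =
        {J | ∃ I, IsSCFacet cs Q' (ρ * q) I ∧ J = I.image Fin.castSucc}) ∧
    -- (ii) if `ℓ(ρq) > ℓ(ρ)`: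
    (cs.length ρ < cs.length (ρ * q) →
      {I | IsSCFacet cs Q ρ I} =
        {J | ∃ I, IsSCFacet cs Q' ρ I ∧ J = insert (Fin.last m) (I.image Fin.castSucc)}) ∧
    -- (iii) otherwise, the disjoint union of the two:
    ((∃ I, IsSCFacet cs Q' ρ I) → cs.length (ρ * q) < cs.length ρ →
      {I | IsSCFacet cs Q ρ I} =
        {J | ∃ I, IsSCFacet cs Q' (ρ * q) I ∧ J = I.image Fin.castSucc} ∪
        {J | ∃ I, IsSCFacet cs Q' ρ I ∧ J = insert (Fin.last m) (I.image Fin.castSucc)} ∧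
      Disjoint {J | ∃ I, IsSCFacet cs Q' (ρ * q) I ∧ J = I.image Fin.castSucc}
        {J | ∃ I, IsSCFacet cs Q' ρ I ∧ J = insert (Fin.last m) (I.image Fin.castSucc)}) :=
  subword_complex_facets_induction_general cs Q ρ
end

section
/- Let I₁ → I₂ → ⋯ → I_{ℓ+1} be a path of increasing flips in a subword complex, where the k-th flip removes position p_k and adds position n_k with p_k < n_k. Then for all k ∈ [ℓ], min{p_k, …, p_ℓ} = min(I_k ∖ I_{ℓ+1}) and max{n_1, …, n_k} = max(I_{k+1} ∖ I_1). Consequently, the path has strictly increasing labels p_1 < ⋯ < p_ℓ if and only if p_k = min(I_k ∖ I_{ℓ+1}) for all k. -/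
open scoped Classical

/-- The edges of the increasing flip graph: `I → J` whenever `I∖{i} = J∖{j}` with
`i < j`. -/
def FlipEdge {B W : Type*} [Group W] {M : CoxeterMatrix B} (cs : CoxeterSystem M W)
    {m : ℕ} (Q : Fin m → B) (ρ : W) (I J : Finset (Fin m)) : Prop :=
  IsSCFacet cs Q ρ I ∧ IsSCFacet cs Q ρ J ∧
    ∃ i ∈ I, ∃ j ∈ J, i < j ∧ I.erase i = J.erase j

/-- The positive edge label of a flip `I → J`: the position flipped out,
i.e. the unique element of `I ∖ J`. -/
def pLab {m : ℕ} (I J : Finset (Fin m)) : ℕ := (I \ J).sup Fin.val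

/-- The negative edge label of a flip `I → J`: the position flipped in,
i.e. the unique element of `J ∖ I`. -/
def nLab {m : ℕ} (I J : Finset (Fin m)) : ℕ := (J \ I).sup Fin.val


/-! Along a path of increasing flips from `I` to `J`, every position in `J ∖ I` lies above some
position in `I ∖ J`, and every position in `I ∖ J` lies below some position in `J ∖ I`: by
induction along the path, since each flip puts in a position larger than the one it takes out.
Consequently the smallest position taken out along the path never comes back, and it is
`min (I ∖ J)`; dually the largest position put in is `max (J ∖ I)`. Applied to the subpaths this
gives the formulas for the suffix minima and prefix maxima of the labels. A list whose suffix
minima are its first entries is weakly increasing, and consecutive positive labels differ, so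
the path is rising exactly when `pₖ = min (Iₖ ∖ I_{ℓ+1})` for all `k`. -/

open Finset

namespace DWalk

variable {α : Type*} {E : α → α → Prop} {u v : α} {l : List α}

theorem mono {E' : α → α → Prop} (hE : ∀ a b, E a b → E' a b) (hw : DWalk E u v l) :
    DWalk E' u v l := by
  induction hw with
  | nil u => exact nil u
  | cons e _ ih => exact cons (hE _ _ e) ih

theorem drop (hw : DWalk E u v l) (d : α) {k : ℕ} (hk : k ≤ l.length) :
    DWalk E ((u :: l).getD k d) v (l.drop k) := by
  induction hw generalizing k with
  | nil u =>
    obtain rfl : k = 0 := by simpa using hk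
    exact nil u
  | cons e hw ih =>
    cases k with
    | zero => exact cons e hw
    | succ k => simpa using ih (by simpa using hk)

theorem take (hw : DWalk E u v l) (d : α) {k : ℕ} (hk : k ≤ l.length) :
    DWalk E u ((u :: l).getD k d) (l.take k) := by
  induction hw generalizing k with
  | nil u =>
    obtain rfl : k = 0 := by simpa using hk
    exact nil u
  | cons e hw ih =>
    cases k with
    | zero => exact nil _
    | succ k => simpa using cons e (ih (by simpa using hk))

end DWalk

section wLabels

variable {α : Type*} (lab : α → α → ℕ)

@[simp]
theorem wLabels_nil (u : α) : wLabels lab u [] = [] := rfl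

@[simp]
theorem wLabels_cons (u w : α) (l : List α) :
    wLabels lab u (w :: l) = lab u w :: wLabels lab w l := rfl

theorem wLabels_drop (d : α) (k : ℕ) (u : α) (l : List α) :
    (wLabels lab u l).drop k = wLabels lab ((u :: l).getD k d) (l.drop k) := by
  induction l generalizing u k with
  | nil => simp
  | cons w l ih => cases k <;> simp [ih]

theorem wLabels_take (k : ℕ) (u : α) (l : List α) :
    (wLabels lab u l).take k = wLabels lab u (l.take k) := by
  induction l generalizing u k with
  | nil => simp
  | cons w l ih => cases k <;> simp [ih]

end wLabels

theorem Finset.min_image_eq_of_subset_of_forall_exists_le {α β : Type*} [Preorder α]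
    [LinearOrder β] {f : α → β} (hf : Monotone f) {s t : Finset α} (hst : s ⊆ t)
    (h : ∀ z ∈ t, ∃ y ∈ s, y ≤ z) : (s.image f).min = (t.image f).min := by
  refine le_antisymm (Finset.le_min fun b hb => ?_) (min_mono (image_subset_image hst))
  obtain ⟨z, hz, rfl⟩ := mem_image.mp hb
  obtain ⟨y, hy, hyz⟩ := h z hz
  exact (min_le (mem_image_of_mem f hy)).trans (WithTop.coe_le_coe.mpr (hf hyz))

theorem Finset.sdiff_subset_insert_sdiff_of_sdiff_eq_singleton {α : Type*} [DecidableEq α]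
    {A B C : Finset α} {a : α} (h : A \ B = {a}) : A \ C ⊆ insert a (B \ C) := by
  intro x hx
  have := Finset.ext_iff.mp h x
  simp only [mem_sdiff, mem_insert, mem_singleton] at *
  grind

theorem Finset.sdiff_subset_insert_sdiff_of_sdiff_eq_singleton' {α : Type*} [DecidableEq α]
    {A B C : Finset α} {a : α} (h : B \ A = {a}) : C \ A ⊆ insert a (C \ B) := by
  intro x hx
  have := Finset.ext_iff.mp h x
  simp only [mem_sdiff, mem_insert, mem_singleton] at *
  grind

theorem Finset.max_image_eq_of_subset_of_forall_exists_ge {α β : Type*} [Preorder α]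
    [LinearOrder β] {f : α → β} (hf : Monotone f) {s t : Finset α} (hst : s ⊆ t)
    (h : ∀ z ∈ t, ∃ y ∈ s, z ≤ y) : (s.image f).max = (t.image f).max := by
  refine le_antisymm (max_mono (image_subset_image hst)) (Finset.max_le fun b hb => ?_)
  obtain ⟨z, hz, rfl⟩ := mem_image.mp hb
  obtain ⟨y, hy, hzy⟩ := h z hz
  exact (WithBot.coe_le_coe.mpr (hf hzy)).trans (le_max (mem_image_of_mem f hy))

namespace List

variable {α : Type*} [LinearOrder α]

theorem pairwise_le_iff_forall_minimum_drop (d : α) :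
    ∀ P : List α, P.Pairwise (· ≤ ·) ↔ ∀ k < P.length, (P.drop k).minimum = P.getD k d
  | [] => by simp
  | a :: P => by
    rw [pairwise_cons, pairwise_le_iff_forall_minimum_drop d P, length_cons,
      Nat.forall_lt_succ_left]
    simp [minimum_eq_coe_iff]

theorem isChain_lt_iff_isChain_le {P : List α} (hP : P.IsChain (· ≠ ·)) :
    P.IsChain (· < ·) ↔ P.IsChain (· ≤ ·) := by
  simp only [isChain_iff_getElem] at hP ⊢
  exact ⟨fun h k hk => (h k hk).le, fun h k hk => (h k hk).lt_of_ne (hP k hk)⟩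

end List

section IncreasingFlips

variable {m : ℕ}

def IsIncFlip (I J : Finset (Fin m)) : Prop :=
  ∃ i j, i < j ∧ I \ J = {i} ∧ J \ I = {j}

theorem FlipEdge.isIncFlip {B W : Type*} [Group W] {M : CoxeterMatrix B}
    {cs : CoxeterSystem M W} {Q : Fin m → B} {ρ : W} {I J : Finset (Fin m)}
    (h : FlipEdge cs Q ρ I J) : IsIncFlip I J := by
  obtain ⟨-, -, i, hi, j, hj, hij, he⟩ := h
  have he' := Finset.ext_iff.mp he
  refine ⟨i, j, hij, ?_, ?_⟩ <;> ext x <;> have := he' x <;>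
    simp only [mem_erase, mem_sdiff, mem_singleton] at * <;> grind

theorem pLab_eq_of_sdiff_eq {I J : Finset (Fin m)} {i : Fin m} (h : I \ J = {i}) :
    pLab I J = i := by
  rw [pLab, h, sup_singleton]

theorem nLab_eq_of_sdiff_eq {I J : Finset (Fin m)} {j : Fin m} (h : J \ I = {j}) :
    nLab I J = j := by
  rw [nLab, h, sup_singleton]

-- `I → I'` is a flip taking out `i` and putting in `j > i`; below, `J` is the end of a path
-- from `I'` and `hJ` is the invariant that such a path satisfies.
variable {I I' J : Finset (Fin m)} {i j : Fin m} (hij : i < j) (hi : I \ I' = {i})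
  (hj : I' \ I = {j})
include hij hi hj

section MinSide

variable (hJ : ∀ x ∈ J \ I', ∃ y ∈ I' \ J, y < x)
include hJ

theorem exists_mem_sdiff_le_of_flip : ∃ y ∈ I \ J, y ≤ i := by
  have hiI : i ∈ I \ I' := hi ▸ mem_singleton_self i
  rw [mem_sdiff] at hiI
  by_cases hiJ : i ∈ J
  · obtain ⟨y, hy, hyi⟩ := hJ i (mem_sdiff.mpr ⟨hiJ, hiI.2⟩)
    rw [mem_sdiff] at hy
    have hyI : y ∈ I := by
      by_contra hyI
      have : y = j := mem_singleton.mp (hj ▸ mem_sdiff.mpr ⟨hy.1, hyI⟩)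
      exact (hyi.trans hij).ne this
    exact ⟨y, mem_sdiff.mpr ⟨hyI, hy.2⟩, hyi.le⟩
  · exact ⟨i, mem_sdiff.mpr ⟨hiI.1, hiJ⟩, le_rfl⟩

theorem forall_mem_sdiff_exists_le_of_flip : ∀ z ∈ I' \ J, ∃ y ∈ I \ J, y ≤ z := by
  intro z hz
  rw [mem_sdiff] at hz
  by_cases hzI : z ∈ I
  · exact ⟨z, mem_sdiff.mpr ⟨hzI, hz.2⟩, le_rfl⟩
  · obtain rfl : z = j := mem_singleton.mp (hj ▸ mem_sdiff.mpr ⟨hz.1, hzI⟩)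
    obtain ⟨y, hy, hyi⟩ := exists_mem_sdiff_le_of_flip hij hi hj hJ
    exact ⟨y, hy, hyi.trans hij.le⟩

theorem forall_mem_sdiff_exists_lt_of_flip : ∀ x ∈ J \ I, ∃ y ∈ I \ J, y < x := by
  intro x hx
  rw [mem_sdiff] at hx
  by_cases hxI' : x ∈ I'
  · obtain rfl : x = j := mem_singleton.mp (hj ▸ mem_sdiff.mpr ⟨hxI', hx.2⟩)
    obtain ⟨y, hy, hyi⟩ := exists_mem_sdiff_le_of_flip hij hi hj hJ
    exact ⟨y, hy, hyi.trans_lt hij⟩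
  · obtain ⟨z, hz, hzx⟩ := hJ x (mem_sdiff.mpr ⟨hx.1, hxI'⟩)
    obtain ⟨y, hy, hyz⟩ := forall_mem_sdiff_exists_le_of_flip hij hi hj hJ z hz
    exact ⟨y, hy, hyz.trans_lt hzx⟩

end MinSide

section MaxSide

variable (hJ : ∀ x ∈ I' \ J, ∃ y ∈ J \ I', x < y)
include hJ

theorem exists_mem_sdiff_ge_of_flip : ∃ y ∈ J \ I, j ≤ y := by
  have hjI' : j ∈ I' \ I := hj ▸ mem_singleton_self j
  rw [mem_sdiff] at hjI'
  by_cases hjJ : j ∈ J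
  · exact ⟨j, mem_sdiff.mpr ⟨hjJ, hjI'.2⟩, le_rfl⟩
  · obtain ⟨y, hy, hjy⟩ := hJ j (mem_sdiff.mpr ⟨hjI'.1, hjJ⟩)
    rw [mem_sdiff] at hy
    have hyI : y ∉ I := by
      intro hyI
      have : y = i := mem_singleton.mp (hi ▸ mem_sdiff.mpr ⟨hyI, hy.2⟩)
      exact (hij.trans hjy).ne' this
    exact ⟨y, mem_sdiff.mpr ⟨hy.1, hyI⟩, hjy.le⟩

theorem forall_mem_sdiff_exists_ge_of_flip : ∀ z ∈ J \ I', ∃ y ∈ J \ I, z ≤ y := by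
  intro z hz
  rw [mem_sdiff] at hz
  by_cases hzI : z ∈ I
  · obtain rfl : z = i := mem_singleton.mp (hi ▸ mem_sdiff.mpr ⟨hzI, hz.2⟩)
    obtain ⟨y, hy, hjy⟩ := exists_mem_sdiff_ge_of_flip hij hi hj hJ
    exact ⟨y, hy, hij.le.trans hjy⟩
  · exact ⟨z, mem_sdiff.mpr ⟨hz.1, hzI⟩, le_rfl⟩

theorem forall_mem_sdiff_exists_gt_of_flip : ∀ x ∈ I \ J, ∃ y ∈ J \ I, x < y := by
  intro x hx
  rw [mem_sdiff] at hx
  by_cases hxI' : x ∈ I'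
  · obtain ⟨z, hz, hxz⟩ := hJ x (mem_sdiff.mpr ⟨hxI', hx.2⟩)
    obtain ⟨y, hy, hzy⟩ := forall_mem_sdiff_exists_ge_of_flip hij hi hj hJ z hz
    exact ⟨y, hy, hxz.trans_le hzy⟩
  · obtain rfl : x = i := mem_singleton.mp (hi ▸ mem_sdiff.mpr ⟨hx.1, hxI'⟩)
    obtain ⟨y, hy, hjy⟩ := exists_mem_sdiff_ge_of_flip hij hi hj hJ
    exact ⟨y, hy, hij.trans_le hjy⟩

end MaxSide

end IncreasingFlips

namespace DWalk

variable {m : ℕ} {I J : Finset (Fin m)} {l : List (Finset (Fin m))}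

theorem forall_mem_sdiff_exists_lt (hw : DWalk IsIncFlip I J l) :
    ∀ x ∈ J \ I, ∃ y ∈ I \ J, y < x := by
  induction hw with
  | nil => simp
  | cons e _ ih =>
    obtain ⟨i, j, hij, hi, hj⟩ := e
    exact forall_mem_sdiff_exists_lt_of_flip hij hi hj ih

theorem forall_mem_sdiff_exists_gt (hw : DWalk IsIncFlip I J l) :
    ∀ x ∈ I \ J, ∃ y ∈ J \ I, x < y := by
  induction hw with
  | nil => simp
  | cons e _ ih =>
    obtain ⟨i, j, hij, hi, hj⟩ := e
    exact forall_mem_sdiff_exists_gt_of_flip hij hi hj ih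

theorem minimum_wLabels_pLab (hw : DWalk IsIncFlip I J l) :
    (wLabels pLab I l).minimum = ((I \ J).image Fin.val).min := by
  induction hw with
  | nil => simp
  | @cons I I' J l e hw ih =>
    obtain ⟨i, j, hij, hi, hj⟩ := e
    have hJ := hw.forall_mem_sdiff_exists_lt
    rw [wLabels_cons, List.minimum_cons, ih, pLab_eq_of_sdiff_eq hi, ← min_insert,
      ← image_insert]
    refine (min_image_eq_of_subset_of_forall_exists_le Fin.val_strictMono.monotone
      (sdiff_subset_insert_sdiff_of_sdiff_eq_singleton hi) fun z hz => ?_).symm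
    rcases mem_insert.mp hz with rfl | hz
    · exact exists_mem_sdiff_le_of_flip hij hi hj hJ
    · exact forall_mem_sdiff_exists_le_of_flip hij hi hj hJ z hz

theorem maximum_wLabels_nLab (hw : DWalk IsIncFlip I J l) :
    (wLabels nLab I l).maximum = ((J \ I).image Fin.val).max := by
  induction hw with
  | nil => simp
  | @cons I I' J l e hw ih =>
    obtain ⟨i, j, hij, hi, hj⟩ := e
    have hJ := hw.forall_mem_sdiff_exists_gt
    rw [wLabels_cons, List.maximum_cons, ih, nLab_eq_of_sdiff_eq hj, ← max_insert,
      ← image_insert]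
    refine (max_image_eq_of_subset_of_forall_exists_ge Fin.val_strictMono.monotone
      (sdiff_subset_insert_sdiff_of_sdiff_eq_singleton' hj) fun z hz => ?_).symm
    rcases mem_insert.mp hz with rfl | hz
    · exact exists_mem_sdiff_ge_of_flip hij hi hj hJ
    · exact forall_mem_sdiff_exists_ge_of_flip hij hi hj hJ z hz

/-- The position flipped out at one step lies outside the next facet, while the position
flipped out at the following step lies inside it. -/
theorem isChain_ne_wLabels_pLab (hw : DWalk IsIncFlip I J l) :
    (wLabels pLab I l).IsChain (· ≠ ·) := by
  induction hw with
  | nil => simp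
  | cons e hw ih =>
    obtain ⟨i, j, -, hi, -⟩ := e
    cases hw with
    | nil => simp
    | cons e' _ =>
      obtain ⟨i', j', -, hi', -⟩ := e'
      rw [wLabels_cons, wLabels_cons, List.isChain_cons_cons]
      refine ⟨?_, ih⟩
      rw [pLab_eq_of_sdiff_eq hi, pLab_eq_of_sdiff_eq hi']
      have hiI' : i ∉ _ := (mem_sdiff.mp (hi ▸ mem_singleton_self i)).2
      have hi'I' : i' ∈ _ := (mem_sdiff.mp (hi' ▸ mem_singleton_self i')).1
      exact fun h => hiI' (Fin.val_injective h ▸ hi'I')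

end DWalk

theorem increasing_flip_path_min_max_general {B W : Type*} [Group W]
    {M : CoxeterMatrix B} (cs : CoxeterSystem M W)
    {m : ℕ} (Q : Fin m → B) (ρ : W) (I J : Finset (Fin m)) (l : List (Finset (Fin m)))
    (hw : DWalk (FlipEdge cs Q ρ) I J l) :
    (∀ k : ℕ, k < l.length →
      ((wLabels pLab I l).drop k).minimum =
        ((((I :: l).getD k ∅) \ J).image Fin.val).min ∧
      ((wLabels nLab I l).take (k + 1)).maximum =
        ((((I :: l).getD (k + 1) ∅) \ I).image Fin.val).max) ∧
    (List.Chain' (· < ·) (wLabels pLab I l) ↔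
      ∀ k : ℕ, k < l.length →
        ((((I :: l).getD k ∅) \ J).image Fin.val).min =
          ((wLabels pLab I l).getD k 0 : WithBot ℕ)) := by
  have hw' : DWalk IsIncFlip I J l := hw.mono fun _ _ => FlipEdge.isIncFlip
  have hmin : ∀ k < l.length, ((wLabels pLab I l).drop k).minimum =
      ((((I :: l).getD k ∅) \ J).image Fin.val).min := fun k hk => by
    rw [wLabels_drop pLab ∅]
    exact (hw'.drop ∅ hk.le).minimum_wLabels_pLab
  refine ⟨fun k hk => ⟨hmin k hk, ?_⟩, ?_⟩
  · rw [wLabels_take]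
    exact (hw'.take ∅ hk).maximum_wLabels_nLab
  · have hlen : (wLabels pLab I l).length = l.length := by simp [wLabels]
    change List.IsChain _ _ ↔ _
    rw [List.isChain_lt_iff_isChain_le hw'.isChain_ne_wLabels_pLab, List.isChain_iff_pairwise,
      List.pairwise_le_iff_forall_minimum_drop 0, hlen]
    exact forall₂_congr fun k hk => by rw [hmin k hk]; exact Iff.rfl

/-- Along a path `I₁ → ⋯ → I_{ℓ+1}` of increasing flips with positive labels `pₖ` and
negative labels `nₖ`: `min{pₖ,…,p_ℓ} = min(Iₖ ∖ I_{ℓ+1})` and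
`max{n₁,…,nₖ} = max(I_{k+1} ∖ I₁)`; consequently the path is rising if and only if
`pₖ = min(Iₖ ∖ I_{ℓ+1})` for all `k`. -/
theorem increasing_flip_path_min_max {B W : Type*} [Group W] [Finite W]
    {M : CoxeterMatrix B} (cs : CoxeterSystem M W)
    {m : ℕ} (Q : Fin m → B) (ρ : W) (I J : Finset (Fin m)) (l : List (Finset (Fin m)))
    (hI : IsSCFacet cs Q ρ I) (hw : DWalk (FlipEdge cs Q ρ) I J l) :
    (∀ k : ℕ, k < l.length →
      ((wLabels pLab I l).drop k).minimum =
        ((((I :: l).getD k ∅) \ J).image Fin.val).min ∧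
      ((wLabels nLab I l).take (k + 1)).maximum =
        ((((I :: l).getD (k + 1) ∅) \ I).image Fin.val).max) ∧
    (List.Chain' (· < ·) (wLabels pLab I l) ↔
      ∀ k : ℕ, k < l.length →
        ((((I :: l).getD k ∅) \ J).image Fin.val).min =
          ((wLabels pLab I l).getD k 0 : WithBot ℕ)) :=
  increasing_flip_path_min_max_general cs Q ρ I J l hw
end
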